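/- arXiv:2303.06952 — 5 statements merged into one kernel-verified Lean document; each statement's English description precedes it below -/
import Mathlib

section
/- In a category C equipped with a summable pairing structure (D, π₀, π₁, σ): a morphism h ∈ C(Y, Z) with h ∘ 0 = 0 is additive if and only if (h ∘ π₀) ⊞ (h ∘ π₁) with sum h ∘ π₀ + h ∘ π₁ = h ∘ σ. -/
open CategoryTheory CategoryTheory.Limits
open scoped Classical

universe v u

/-- A summable pairing structure on a category `C` whose hom-sets carry a
distinguished morphism `0` satisfying `0 ∘ f = 0`. -/
structure SummablePairing (C : Type u) [Category.{v} C] where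
  /-- the distinguished zero morphism of each hom-set -/
  zero : ∀ X Y : C, X ⟶ Y
  /-- `0 ∘ f = 0` -/
  comp_zero : ∀ {X Y Z : C} (f : X ⟶ Y), f ≫ zero Y Z = zero X Z
  /-- the map on objects -/
  D : C → C
  p0 : ∀ X : C, D X ⟶ X
  p1 : ∀ X : C, D X ⟶ X
  s : ∀ X : C, D X ⟶ X
  /-- `p0` and `p1` are jointly monic -/
  jointly_monic : ∀ {Y X : C} {f g : Y ⟶ D X},
    f ≫ p0 X = g ≫ p0 X → f ≫ p1 X = g ≫ p1 X → f = g

namespace SummablePairing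

variable {C : Type u} [Category.{v} C]

/-- `f0 ⊞ f1` : summability of two parallel morphisms. -/
def Summable (S : SummablePairing C) {X Y : C} (f0 f1 : X ⟶ Y) : Prop :=
  ∃ w : X ⟶ S.D Y, w ≫ S.p0 Y = f0 ∧ w ≫ S.p1 Y = f1

/-- the witness `⟨f0, f1⟩` of a summable pair (an arbitrary default otherwise) -/
noncomputable def wit (S : SummablePairing C) {X Y : C} (f0 f1 : X ⟶ Y) : X ⟶ S.D Y :=
  if h : S.Summable f0 f1 then h.choose else S.zero X (S.D Y)

/-- the sum `f0 + f1` of a summable pair -/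
noncomputable def add (S : SummablePairing C) {X Y : C} (f0 f1 : X ⟶ Y) : X ⟶ Y :=
  S.wit f0 f1 ≫ S.s Y

/-- additive morphisms -/
def Additive (S : SummablePairing C) {Y Z : C} (h : Y ⟶ Z) : Prop :=
  (∀ X : C, S.zero X Y ≫ h = S.zero X Z) ∧
  (∀ (X : C) (f0 f1 : X ⟶ Y), S.Summable f0 f1 →
    S.Summable (f0 ≫ h) (f1 ≫ h) ∧ S.add f0 f1 ≫ h = S.add (f0 ≫ h) (f1 ≫ h))

/-- a left pre-summability structure: `p0`, `p1` and `s` are additive -/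
def IsLeftPreSummability (S : SummablePairing C) : Prop :=
  (∀ X : C, S.Additive (S.p0 X)) ∧ (∀ X : C, S.Additive (S.p1 X)) ∧
  (∀ X : C, S.Additive (S.s X))

/-- axiom (D-com) -/
def Dcom (S : SummablePairing C) : Prop :=
  ∀ X : C, S.Summable (S.p1 X) (S.p0 X) ∧ S.add (S.p1 X) (S.p0 X) = S.s X

/-- axiom (D-zero) -/
def Dzero (S : SummablePairing C) : Prop :=
  ∀ X : C, S.Summable (𝟙 X) (S.zero X X) ∧ S.Summable (S.zero X X) (𝟙 X) ∧
    S.add (𝟙 X) (S.zero X X) = 𝟙 X ∧ S.add (S.zero X X) (𝟙 X) = 𝟙 X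

/-- axiom (D-witness) -/
def Dwitness (S : SummablePairing C) : Prop :=
  ∀ (Y X : C) (f g : Y ⟶ S.D X),
    S.Summable (f ≫ S.s X) (g ≫ S.s X) → S.Summable f g

/-- a left summability structure -/
def IsLeftSummability (S : SummablePairing C) : Prop :=
  S.IsLeftPreSummability ∧ S.Dcom ∧ S.Dzero ∧ S.Dwitness

/-- `ι₀ = ⟨id, 0⟩` -/
noncomputable def iota0 (S : SummablePairing C) (X : C) : X ⟶ S.D X :=
  S.wit (𝟙 X) (S.zero X X)

/-- `θ = ⟨π₀ ∘ π₀, π₁ ∘ π₀ + π₀ ∘ π₁⟩` -/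
noncomputable def theta (S : SummablePairing C) (X : C) : S.D (S.D X) ⟶ S.D X :=
  S.wit (S.p0 (S.D X) ≫ S.p0 X)
    (S.add (S.p0 (S.D X) ≫ S.p1 X) (S.p1 (S.D X) ≫ S.p0 X))

/-- `l = ⟨⟨π₀, 0⟩, ⟨0, π₁⟩⟩` -/
noncomputable def lmor (S : SummablePairing C) (X : C) : S.D X ⟶ S.D (S.D X) :=
  S.wit (S.wit (S.p0 X) (S.zero (S.D X) X)) (S.wit (S.zero (S.D X) X) (S.p1 X))

/-- `c = ⟨⟨π₀ ∘ π₀, π₀ ∘ π₁⟩, ⟨π₁ ∘ π₀, π₁ ∘ π₁⟩⟩` -/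
noncomputable def cmor (S : SummablePairing C) (X : C) : S.D (S.D X) ⟶ S.D (S.D X) :=
  S.wit (S.wit (S.p0 (S.D X) ≫ S.p0 X) (S.p1 (S.D X) ≫ S.p0 X))
        (S.wit (S.p0 (S.D X) ≫ S.p1 X) (S.p1 (S.D X) ≫ S.p1 X))

end SummablePairing

/-- summability of a finite family of morphisms (represented as a multiset),
together with its sum, defined inductively -/
inductive SummablePairing.MSummable {C : Type u} [Category.{v} C] (S : SummablePairing C) :
    ∀ {X Y : C}, Multiset (X ⟶ Y) → (X ⟶ Y) → Prop
  | nil {X Y : C} : SummablePairing.MSummable S (0 : Multiset (X ⟶ Y)) (S.zero X Y)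
  | cons {X Y : C} {m : Multiset (X ⟶ Y)} {t f : X ⟶ Y} :
      SummablePairing.MSummable S m t → S.Summable t f →
      SummablePairing.MSummable S (f ::ₘ m) (S.add t f)

/-- the data making a left summability structure a pre-differential structure:
an operator `D` on morphisms with `π₀ ∘ D f = f ∘ π₀` -/
structure DiffOp {C : Type u} [Category.{v} C] (S : SummablePairing C) where
  map : ∀ {X Y : C}, (X ⟶ Y) → (S.D X ⟶ S.D Y)
  map_p0 : ∀ {X Y : C} (f : X ⟶ Y), map f ≫ S.p0 Y = S.p0 X ≫ f

namespace DiffOp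

variable {C : Type u} [Category.{v} C] {S : SummablePairing C}

/-- the differential `∂f = π₁ ∘ D f` -/
def dd (Dm : DiffOp S) {X Y : C} (f : X ⟶ Y) : S.D X ⟶ Y := Dm.map f ≫ S.p1 Y

/-- D-linear morphisms -/
def DLinear (Dm : DiffOp S) {X Y : C} (f : X ⟶ Y) : Prop :=
  Dm.map f ≫ S.p1 Y = S.p1 X ≫ f ∧ Dm.map f ≫ S.s Y = S.s X ≫ f ∧
  (∀ U : C, S.zero U X ≫ f = S.zero U Y)

/-- axiom (Dproj-lin) -/
def DprojLin (Dm : DiffOp S) : Prop :=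
  (∀ X : C, Dm.DLinear (S.p0 X)) ∧ (∀ X : C, Dm.DLinear (S.p1 X))

/-- axiom (Dsum-lin) -/
def DsumLin (Dm : DiffOp S) : Prop :=
  (∀ X : C, Dm.DLinear (S.s X)) ∧ (∀ X Y : C, Dm.DLinear (S.zero X Y))

/-- axiom (D-chain): functoriality -/
def Dchain (Dm : DiffOp S) : Prop :=
  (∀ X : C, Dm.map (𝟙 X) = 𝟙 (S.D X)) ∧
  (∀ (X Y Z : C) (f : X ⟶ Y) (g : Y ⟶ Z), Dm.map (f ≫ g) = Dm.map f ≫ Dm.map g)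

/-- axiom (D-add): naturality of `ι₀` and `θ` -/
def Dadd (Dm : DiffOp S) : Prop :=
  (∀ (X Y : C) (f : X ⟶ Y), S.iota0 X ≫ Dm.map f = f ≫ S.iota0 Y) ∧
  (∀ (X Y : C) (f : X ⟶ Y), S.theta X ≫ Dm.map f = Dm.map (Dm.map f) ≫ S.theta Y)

/-- axiom (D-lin): naturality of `l` -/
def Dlin (Dm : DiffOp S) : Prop :=
  ∀ (X Y : C) (f : X ⟶ Y), Dm.map f ≫ S.lmor Y = S.lmor X ≫ Dm.map (Dm.map f)

/-- axiom (D-Schwarz): naturality of `c` -/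
def Dschwarz (Dm : DiffOp S) : Prop :=
  ∀ (X Y : C) (f : X ⟶ Y),
    S.cmor X ≫ Dm.map (Dm.map f) = Dm.map (Dm.map f) ≫ S.cmor Y

end DiffOp

namespace SummablePairing

variable {C : Type u} [Category.{v} C] (S : SummablePairing C)

lemma wit_spec {X Y : C} {f0 f1 : X ⟶ Y} (h : S.Summable f0 f1) :
    S.wit f0 f1 ≫ S.p0 Y = f0 ∧ S.wit f0 f1 ≫ S.p1 Y = f1 := by
  rw [wit, dif_pos h]; exact h.choose_spec

lemma wit_unique {X Y : C} {f0 f1 : X ⟶ Y} {w : X ⟶ S.D Y}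
    (h0 : w ≫ S.p0 Y = f0) (h1 : w ≫ S.p1 Y = f1) : S.wit f0 f1 = w := by
  have hs : S.Summable f0 f1 := ⟨w, h0, h1⟩
  exact S.jointly_monic (by rw [(S.wit_spec hs).1, h0]) (by rw [(S.wit_spec hs).2, h1])

end SummablePairing

/-- characterization of additivity. -/
theorem stmt1 {C : Type u} [Category.{v} C] (S : SummablePairing C)
    {Y Z : C} (h : Y ⟶ Z) (hz : ∀ X : C, S.zero X Y ≫ h = S.zero X Z) :
    S.Additive h ↔
      (S.Summable (S.p0 Y ≫ h) (S.p1 Y ≫ h) ∧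
        S.add (S.p0 Y ≫ h) (S.p1 Y ≫ h) = S.s Y ≫ h) := by
  constructor
  · intro ⟨_, hadd⟩
    have hsum : S.Summable (S.p0 Y) (S.p1 Y) :=
      ⟨𝟙 (S.D Y), Category.id_comp _, Category.id_comp _⟩
    have hw : S.wit (S.p0 Y) (S.p1 Y) = 𝟙 (S.D Y) :=
      S.wit_unique (Category.id_comp _) (Category.id_comp _)
    have ha : S.add (S.p0 Y) (S.p1 Y) = S.s Y := by
      rw [SummablePairing.add, hw, Category.id_comp]
    obtain ⟨h1, h2⟩ := hadd (S.D Y) (S.p0 Y) (S.p1 Y) hsum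
    exact ⟨h1, by rw [← h2, ha]⟩
  · rintro ⟨⟨w, hw0, hw1⟩, hsum⟩
    refine ⟨hz, fun X f0 f1 hf => ?_⟩
    obtain ⟨v, hv0, hv1⟩ := hf
    have hwit : S.wit f0 f1 = v := S.wit_unique hv0 hv1
    have key0 : (v ≫ w) ≫ S.p0 Z = f0 ≫ h := by
      rw [Category.assoc, hw0, ← Category.assoc, hv0]
    have key1 : (v ≫ w) ≫ S.p1 Z = f1 ≫ h := by
      rw [Category.assoc, hw1, ← Category.assoc, hv1]
    refine ⟨⟨v ≫ w, key0, key1⟩, ?_⟩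
    have hwit2 : S.wit (f0 ≫ h) (f1 ≫ h) = v ≫ w := S.wit_unique key0 key1
    have hws : w ≫ S.s Z = S.s Y ≫ h := by
      have := hsum
      rwa [SummablePairing.add, S.wit_unique hw0 hw1] at this
    rw [SummablePairing.add, SummablePairing.add, hwit, hwit2, Category.assoc, Category.assoc,
      hws]
end

section
/- If a left pre-summability structure (D, π₀, π₁, σ) on a category C satisfies (D-zero), (D-com) and (D-witness), then every hom-set C(X, Y) is a partial commutative monoid: (i) for all f, f ⊞ 0 and 0 ⊞ f with 0 + f = f + 0 = f; (ii) if f₀ ⊞ f₁ then f₁ ⊞ f₀ and f₀ + f₁ = f₁ + f₀; (iii) if (f₀ + f₁) + f₂ is well defined (i.e. f₀ ⊞ f₁ and (f₀ + f₁) ⊞ f₂) or f₀ + (f₁ + f₂) is well defined (i.e. f₁ ⊞ f₂ and f₀ ⊞ (f₁ + f₂)), then both are well defined and (f₀ + f₁) + f₂ = f₀ + (f₁ + f₂). -/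
open CategoryTheory CategoryTheory.Limits
open scoped Classical

universe v u

section Aux

variable {C : Type u} [Category.{v} C] (S : SummablePairing C)

lemma aux_wit_spec {X Y : C} {f0 f1 : X ⟶ Y} (h : S.Summable f0 f1) :
    S.wit f0 f1 ≫ S.p0 Y = f0 ∧ S.wit f0 f1 ≫ S.p1 Y = f1 := by
  unfold SummablePairing.wit
  rw [dif_pos h]
  exact h.choose_spec

lemma aux_wit_eq {X Y : C} {f0 f1 : X ⟶ Y} {w : X ⟶ S.D Y}
    (h0 : w ≫ S.p0 Y = f0) (h1 : w ≫ S.p1 Y = f1) : S.wit f0 f1 = w := by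
  have hs : S.Summable f0 f1 := ⟨w, h0, h1⟩
  have hspec := aux_wit_spec S hs
  exact S.jointly_monic (by rw [hspec.1, h0]) (by rw [hspec.2, h1])

lemma aux_add_eq {X Y : C} {f0 f1 : X ⟶ Y} {w : X ⟶ S.D Y}
    (h0 : w ≫ S.p0 Y = f0) (h1 : w ≫ S.p1 Y = f1) : S.add f0 f1 = w ≫ S.s Y := by
  unfold SummablePairing.add
  rw [aux_wit_eq S h0 h1]

lemma aux_precomp {X Y : C} {f0 f1 : X ⟶ Y} (h : S.Summable f0 f1) {W : C} (g : W ⟶ X) :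
    S.Summable (g ≫ f0) (g ≫ f1) ∧ g ≫ S.add f0 f1 = S.add (g ≫ f0) (g ≫ f1) := by
  obtain ⟨h0, h1⟩ := aux_wit_spec S h
  have w0 : (g ≫ S.wit f0 f1) ≫ S.p0 Y = g ≫ f0 := by rw [Category.assoc, h0]
  have w1 : (g ≫ S.wit f0 f1) ≫ S.p1 Y = g ≫ f1 := by rw [Category.assoc, h1]
  refine ⟨⟨g ≫ S.wit f0 f1, w0, w1⟩, ?_⟩
  rw [aux_add_eq S w0 w1, SummablePairing.add, Category.assoc]

end Aux

/-- under (D-zero), (D-com) and (D-witness), each hom-set of a left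
pre-summability structure is a partial commutative monoid. -/
theorem stmt4 {C : Type u} [Category.{v} C] (S : SummablePairing C)
    (hpre : S.IsLeftPreSummability) (hz : S.Dzero) (hc : S.Dcom) (hw : S.Dwitness)
    (X Y : C) :
    (∀ f : X ⟶ Y, S.Summable f (S.zero X Y) ∧ S.Summable (S.zero X Y) f ∧
      S.add (S.zero X Y) f = f ∧ S.add f (S.zero X Y) = f) ∧
    (∀ f0 f1 : X ⟶ Y, S.Summable f0 f1 →
      S.Summable f1 f0 ∧ S.add f0 f1 = S.add f1 f0) ∧
    (∀ f0 f1 f2 : X ⟶ Y,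
      ((S.Summable f0 f1 ∧ S.Summable (S.add f0 f1) f2) ∨
       (S.Summable f1 f2 ∧ S.Summable f0 (S.add f1 f2))) →
      (S.Summable f0 f1 ∧ S.Summable (S.add f0 f1) f2) ∧
      (S.Summable f1 f2 ∧ S.Summable f0 (S.add f1 f2)) ∧
      S.add (S.add f0 f1) f2 = S.add f0 (S.add f1 f2)) := by
  -- unit laws
  have unit : ∀ f : X ⟶ Y, S.Summable f (S.zero X Y) ∧ S.Summable (S.zero X Y) f ∧
      S.add (S.zero X Y) f = f ∧ S.add f (S.zero X Y) = f := by
    intro f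
    obtain ⟨hsid0, hs0id, hadd1, hadd2⟩ := hz Y
    have h1 := aux_precomp S hsid0 f
    have h2 := aux_precomp S hs0id f
    rw [Category.comp_id, S.comp_zero] at h1 h2
    refine ⟨h1.1, h2.1, ?_, ?_⟩
    · rw [← h2.2, hadd2, Category.comp_id]
    · rw [← h1.2, hadd1, Category.comp_id]
  -- commutativity
  have comm : ∀ f0 f1 : X ⟶ Y, S.Summable f0 f1 →
      S.Summable f1 f0 ∧ S.add f0 f1 = S.add f1 f0 := by
    intro f0 f1 h
    obtain ⟨h0, h1⟩ := aux_wit_spec S h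
    obtain ⟨hcs, hca⟩ := hc Y
    have hp := aux_precomp S hcs (S.wit f0 f1)
    rw [h0, h1] at hp
    refine ⟨hp.1, ?_⟩
    rw [← hp.2, hca]
    rfl
  refine ⟨unit, comm, ?_⟩
  -- associativity, key step
  have key : ∀ f0 f1 f2 : X ⟶ Y, S.Summable f0 f1 → S.Summable (S.add f0 f1) f2 →
      (S.Summable f1 f2 ∧ S.Summable f0 (S.add f1 f2)) ∧
      S.add (S.add f0 f1) f2 = S.add f0 (S.add f1 f2) := by
    intro f0 f1 f2 h01 h012
    set w01 := S.wit f0 f1 with hw01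
    obtain ⟨h010, h011⟩ := aux_wit_spec S h01
    have hz2 : S.Summable (S.zero X Y) f2 := (unit f2).2.1
    set v2 := S.wit (S.zero X Y) f2 with hv2
    obtain ⟨hv20, hv21⟩ := aux_wit_spec S hz2
    -- apply D-witness
    have hws : w01 ≫ S.s Y = S.add f0 f1 := rfl
    have hvs : v2 ≫ S.s Y = f2 := by
      have : S.add (S.zero X Y) f2 = v2 ≫ S.s Y := rfl
      rw [← this, (unit f2).2.2.1]
    have hsum : S.Summable w01 v2 := by
      apply hw X Y w01 v2
      rw [hws, hvs]
      exact h012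
    -- additivity of p0, p1, s
    have hp0 := (hpre.1 Y).2 X w01 v2 hsum
    have hp1 := (hpre.2.1 Y).2 X w01 v2 hsum
    have hs := (hpre.2.2 Y).2 X w01 v2 hsum
    rw [h010, hv20] at hp0
    rw [h011, hv21] at hp1
    rw [hws, hvs] at hs
    have h12 : S.Summable f1 f2 := hp1.1
    set u := S.add w01 v2 with hu
    have hu0 : u ≫ S.p0 Y = f0 := by rw [hp0.2, (unit f0).2.2.2]
    have hu1 : u ≫ S.p1 Y = S.add f1 f2 := hp1.2
    have hsum012 : S.Summable f0 (S.add f1 f2) := ⟨u, hu0, hu1⟩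
    refine ⟨⟨h12, hsum012⟩, ?_⟩
    rw [aux_add_eq S hu0 hu1, ← hs.2]
  have key' : ∀ f0 f1 f2 : X ⟶ Y, S.Summable f1 f2 → S.Summable f0 (S.add f1 f2) →
      (S.Summable f0 f1 ∧ S.Summable (S.add f0 f1) f2) ∧
      S.add (S.add f0 f1) f2 = S.add f0 (S.add f1 f2) := by
    intro f0 f1 f2 h12 h012
    set w12 := S.wit f1 f2 with hw12
    obtain ⟨h120, h121⟩ := aux_wit_spec S h12
    have hz0 : S.Summable f0 (S.zero X Y) := (unit f0).1
    set v0 := S.wit f0 (S.zero X Y) with hv0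
    obtain ⟨hv00, hv01⟩ := aux_wit_spec S hz0
    have hws : w12 ≫ S.s Y = S.add f1 f2 := rfl
    have hvs : v0 ≫ S.s Y = f0 := by
      have : S.add f0 (S.zero X Y) = v0 ≫ S.s Y := rfl
      rw [← this, (unit f0).2.2.2]
    have hsum : S.Summable v0 w12 := by
      apply hw X Y v0 w12
      rw [hws, hvs]
      exact h012
    have hp0 := (hpre.1 Y).2 X v0 w12 hsum
    have hp1 := (hpre.2.1 Y).2 X v0 w12 hsum
    have hs := (hpre.2.2 Y).2 X v0 w12 hsum
    rw [hv00, h120] at hp0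
    rw [hv01, h121] at hp1
    rw [hws, hvs] at hs
    have h01 : S.Summable f0 f1 := hp0.1
    set u := S.add v0 w12 with hu
    have hu0 : u ≫ S.p0 Y = S.add f0 f1 := hp0.2
    have hu1 : u ≫ S.p1 Y = f2 := by rw [hp1.2, (unit f2).2.2.1]
    have hsum012 : S.Summable (S.add f0 f1) f2 := ⟨u, hu0, hu1⟩
    refine ⟨⟨h01, hsum012⟩, ?_⟩
    rw [aux_add_eq S hu0 hu1, ← hs.2]
  intro f0 f1 f2 h
  rcases h with ⟨h01, h012⟩ | ⟨h12, h012⟩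
  · obtain ⟨⟨h12, hs012⟩, heq⟩ := key f0 f1 f2 h01 h012
    exact ⟨⟨h01, h012⟩, ⟨h12, hs012⟩, heq⟩
  · obtain ⟨⟨h01, hs012⟩, heq⟩ := key' f0 f1 f2 h12 h012
    exact ⟨⟨h01, hs012⟩, ⟨h12, h012⟩, heq⟩
end

section
/- In a category C equipped with a pre-differential structure satisfying (Dproj-lin) and (D-chain): if h₀, h₁ ∈ C(X, Y) are summable and both D-linear, then the witness ⟨h₀, h₁⟩ ∈ C(X, D Y) is D-linear. -/
open CategoryTheory CategoryTheory.Limits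
open scoped Classical

universe v u

/-- under (Dproj-lin) and (D-chain), the witness of a summable pair
of D-linear morphisms is D-linear. -/
theorem stmt10 {C : Type u} [Category.{v} C] (S : SummablePairing C)
    (hS : S.IsLeftSummability) (Dm : DiffOp S)
    (hproj : Dm.DprojLin) (hchain : Dm.Dchain)
    {X Y : C} (h0 h1 : X ⟶ Y) (hs : S.Summable h0 h1)
    (l0 : Dm.DLinear h0) (l1 : Dm.DLinear h1) :
    Dm.DLinear (S.wit h0 h1) := by
  obtain ⟨hw0, hw1⟩ : S.wit h0 h1 ≫ S.p0 Y = h0 ∧ S.wit h0 h1 ≫ S.p1 Y = h1 := by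
    unfold SummablePairing.wit
    rw [dif_pos hs]
    exact hs.choose_spec
  have mw0 : Dm.map (S.wit h0 h1) ≫ Dm.map (S.p0 Y) = Dm.map h0 := by
    rw [← hchain.2 _ _ _ _ _, hw0]
  have mw1 : Dm.map (S.wit h0 h1) ≫ Dm.map (S.p1 Y) = Dm.map h1 := by
    rw [← hchain.2 _ _ _ _ _, hw1]
  refine ⟨?_, ?_, ?_⟩
  · apply S.jointly_monic
    · calc (Dm.map (S.wit h0 h1) ≫ S.p1 (S.D Y)) ≫ S.p0 Y
          = Dm.map (S.wit h0 h1) ≫ Dm.map (S.p0 Y) ≫ S.p1 Y := by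
            rw [(hproj.1 Y).1]; simp
        _ = Dm.map h0 ≫ S.p1 Y := by rw [← Category.assoc, mw0]
        _ = S.p1 X ≫ h0 := l0.1
        _ = (S.p1 X ≫ S.wit h0 h1) ≫ S.p0 Y := by rw [Category.assoc, hw0]
    · calc (Dm.map (S.wit h0 h1) ≫ S.p1 (S.D Y)) ≫ S.p1 Y
          = Dm.map (S.wit h0 h1) ≫ Dm.map (S.p1 Y) ≫ S.p1 Y := by
            rw [(hproj.2 Y).1]; simp
        _ = Dm.map h1 ≫ S.p1 Y := by rw [← Category.assoc, mw1]
        _ = S.p1 X ≫ h1 := l1.1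
        _ = (S.p1 X ≫ S.wit h0 h1) ≫ S.p1 Y := by rw [Category.assoc, hw1]
  · apply S.jointly_monic
    · calc (Dm.map (S.wit h0 h1) ≫ S.s (S.D Y)) ≫ S.p0 Y
          = Dm.map (S.wit h0 h1) ≫ Dm.map (S.p0 Y) ≫ S.s Y := by
            rw [(hproj.1 Y).2.1]; simp
        _ = Dm.map h0 ≫ S.s Y := by rw [← Category.assoc, mw0]
        _ = S.s X ≫ h0 := l0.2.1
        _ = (S.s X ≫ S.wit h0 h1) ≫ S.p0 Y := by rw [Category.assoc, hw0]
    · calc (Dm.map (S.wit h0 h1) ≫ S.s (S.D Y)) ≫ S.p1 Y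
          = Dm.map (S.wit h0 h1) ≫ Dm.map (S.p1 Y) ≫ S.s Y := by
            rw [(hproj.2 Y).2.1]; simp
        _ = Dm.map h1 ≫ S.s Y := by rw [← Category.assoc, mw1]
        _ = S.s X ≫ h1 := l1.2.1
        _ = (S.s X ≫ S.wit h0 h1) ≫ S.p1 Y := by rw [Category.assoc, hw1]
  · intro U
    apply S.jointly_monic
    · rw [Category.assoc, hw0, l0.2.2, ((hproj.1 Y).2.2 U)]
    · rw [Category.assoc, hw1, l1.2.2, ((hproj.2 Y).2.2 U)]
end

section
/- In a category C equipped with a pre-differential structure satisfying (Dproj-lin) and (D-chain): for any f₀, f₁ ∈ C(X, Y) with f₀ ⊞ f₁, one has D f₀ ⊞ D f₁ and ⟨D f₀, D f₁⟩ = c ∘ D⟨f₀, f₁⟩. -/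
open CategoryTheory CategoryTheory.Limits
open scoped Classical

universe v u

namespace SummablePairing

variable {C : Type u} [Category.{v} C]

theorem wit_p0' (S : SummablePairing C) {X Y : C} {f0 f1 : X ⟶ Y}
    (h : S.Summable f0 f1) : S.wit f0 f1 ≫ S.p0 Y = f0 := by
  unfold wit; rw [dif_pos h]; exact h.choose_spec.1

theorem wit_p1' (S : SummablePairing C) {X Y : C} {f0 f1 : X ⟶ Y}
    (h : S.Summable f0 f1) : S.wit f0 f1 ≫ S.p1 Y = f1 := by
  unfold wit; rw [dif_pos h]; exact h.choose_spec.2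

theorem wit_eq' (S : SummablePairing C) {X Y : C} {f0 f1 : X ⟶ Y}
    (h : S.Summable f0 f1) {w : X ⟶ S.D Y} (h0 : w ≫ S.p0 Y = f0)
    (h1 : w ≫ S.p1 Y = f1) : S.wit f0 f1 = w :=
  S.jointly_monic (by rw [S.wit_p0' h, h0]) (by rw [S.wit_p1' h, h1])

end SummablePairing

/-- under (Dproj-lin) and (D-chain), summable pairs are preserved by
`D` and `⟨D f₀, D f₁⟩ = c ∘ D⟨f₀, f₁⟩`. -/
theorem stmt11 {C : Type u} [Category.{v} C] (S : SummablePairing C)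
    (hS : S.IsLeftSummability) (Dm : DiffOp S)
    (hproj : Dm.DprojLin) (hchain : Dm.Dchain)
    {X Y : C} (f0 f1 : X ⟶ Y) (hs : S.Summable f0 f1) :
    S.Summable (Dm.map f0) (Dm.map f1) ∧
    S.wit (Dm.map f0) (Dm.map f1) = Dm.map (S.wit f0 f1) ≫ S.cmor Y := by
  -- the witness of (f0, f1)
  set w := S.wit f0 f1 with hw
  have hw0 : w ≫ S.p0 Y = f0 := S.wit_p0' hs
  have hw1 : w ≫ S.p1 Y = f1 := S.wit_p1' hs
  -- summability of (D p0, D p1)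
  have hsum_maps : S.Summable (Dm.map (S.p0 Y)) (Dm.map (S.p1 Y)) := by
    apply hS.2.2.2
    rw [(hproj.1 Y).2.1, (hproj.2 Y).2.1]
    exact ⟨S.s (S.D Y), rfl, rfl⟩
  -- inner pairs of c
  have h0 : S.Summable (S.p0 (S.D Y) ≫ S.p0 Y) (S.p1 (S.D Y) ≫ S.p0 Y) :=
    ⟨Dm.map (S.p0 Y), Dm.map_p0 _, (hproj.1 Y).1⟩
  have h1 : S.Summable (S.p0 (S.D Y) ≫ S.p1 Y) (S.p1 (S.D Y) ≫ S.p1 Y) :=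
    ⟨Dm.map (S.p1 Y), Dm.map_p0 _, (hproj.2 Y).1⟩
  have e0 : S.wit (S.p0 (S.D Y) ≫ S.p0 Y) (S.p1 (S.D Y) ≫ S.p0 Y) = Dm.map (S.p0 Y) :=
    S.wit_eq' h0 (Dm.map_p0 _) ((hproj.1 Y).1)
  have e1 : S.wit (S.p0 (S.D Y) ≫ S.p1 Y) (S.p1 (S.D Y) ≫ S.p1 Y) = Dm.map (S.p1 Y) :=
    S.wit_eq' h1 (Dm.map_p0 _) ((hproj.2 Y).1)
  have hcmor : S.cmor Y = S.wit (Dm.map (S.p0 Y)) (Dm.map (S.p1 Y)) := by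
    rw [SummablePairing.cmor, e0, e1]
  have hc0 : S.cmor Y ≫ S.p0 (S.D Y) = Dm.map (S.p0 Y) := by
    rw [hcmor]; exact S.wit_p0' hsum_maps
  have hc1 : S.cmor Y ≫ S.p1 (S.D Y) = Dm.map (S.p1 Y) := by
    rw [hcmor]; exact S.wit_p1' hsum_maps
  -- the candidate witness
  have hW0 : (Dm.map w ≫ S.cmor Y) ≫ S.p0 (S.D Y) = Dm.map f0 := by
    rw [Category.assoc, hc0, ← hchain.2 _ _ _ w (S.p0 Y), hw0]
  have hW1 : (Dm.map w ≫ S.cmor Y) ≫ S.p1 (S.D Y) = Dm.map f1 := by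
    rw [Category.assoc, hc1, ← hchain.2 _ _ _ w (S.p1 Y), hw1]
  have hsum : S.Summable (Dm.map f0) (Dm.map f1) := ⟨Dm.map w ≫ S.cmor Y, hW0, hW1⟩
  exact ⟨hsum, S.wit_eq' hsum hW0 hW1⟩
end

section
/- In a category C equipped with a pre-differential structure: the operator D is a functor (i.e. D id = id and D(g ∘ f) = D g ∘ D f) if and only if ∂(id) = π₁ and, for all composable f, g, ∂(g ∘ f) = ∂g ∘ ⟨f ∘ π₀, ∂f⟩ (the chain rule). -/
open CategoryTheory CategoryTheory.Limits
open scoped Classical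

universe v u

theorem wit_eq {C : Type u} [Category.{v} C] (S : SummablePairing C)
    {X Y : C} {f0 f1 : X ⟶ Y} {w : X ⟶ S.D Y}
    (h0 : w ≫ S.p0 Y = f0) (h1 : w ≫ S.p1 Y = f1) :
    S.wit f0 f1 = w := by
  have hs : S.Summable f0 f1 := ⟨w, h0, h1⟩
  rw [SummablePairing.wit, dif_pos hs]
  exact S.jointly_monic (hs.choose_spec.1.trans h0.symm)
    (hs.choose_spec.2.trans h1.symm)

theorem wit_map {C : Type u} [Category.{v} C] {S : SummablePairing C}
    (Dm : DiffOp S) {X Y : C} (f : X ⟶ Y) :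
    S.wit (S.p0 X ≫ f) (Dm.dd f) = Dm.map f :=
  wit_eq S (Dm.map_p0 f) rfl

/-- `D` is a functor iff `∂(id) = π₁` and the chain rule
`∂(g ∘ f) = ∂g ∘ ⟨f ∘ π₀, ∂f⟩` holds. -/
theorem stmt13 {C : Type u} [Category.{v} C] (S : SummablePairing C)
    (hS : S.IsLeftSummability) (Dm : DiffOp S) :
    ((∀ X : C, Dm.map (𝟙 X) = 𝟙 (S.D X)) ∧
     (∀ (X Y Z : C) (f : X ⟶ Y) (g : Y ⟶ Z), Dm.map (f ≫ g) = Dm.map f ≫ Dm.map g)) ↔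
    ((∀ X : C, Dm.dd (𝟙 X) = S.p1 X) ∧
     (∀ (X Y Z : C) (f : X ⟶ Y) (g : Y ⟶ Z),
        Dm.dd (f ≫ g) = S.wit (S.p0 X ≫ f) (Dm.dd f) ≫ Dm.dd g)) := by
  constructor
  · rintro ⟨hid, hcomp⟩
    constructor
    · intro X
      simp [DiffOp.dd, hid]
    · intro X Y Z f g
      rw [wit_map, DiffOp.dd, hcomp, Category.assoc]
      rfl
  · rintro ⟨hid, hcomp⟩
    constructor
    · intro X
      apply S.jointly_monic
      · rw [Dm.map_p0]; simp
      · have := hid X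
        rw [DiffOp.dd] at this
        simp [this]
    · intro X Y Z f g
      apply S.jointly_monic
      · have h2 : Dm.map f ≫ Dm.map g ≫ S.p0 Z = S.p0 X ≫ f ≫ g := by
          rw [Dm.map_p0 g, ← Category.assoc, Dm.map_p0, Category.assoc]
        rw [Category.assoc, Dm.map_p0, h2]
      · have := hcomp X Y Z f g
        rw [DiffOp.dd] at this
        rw [this, wit_map, Category.assoc]
        rfl
end
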